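/- Let B ⊆ A be rings, α an automorphism of A, β an automorphism of B. Then A is an (α,β)-Frobenius extension of B if and only if there exist a (B,B)-bimodule map tr : _β A_α → B and finite subsets {x_1,...,x_n}, {y_1,...,y_n} of A such that for all a ∈ A: a = Σ_{i=1}^n β(tr(a y_i)) x_i and a = Σ_{i=1}^n α^{-1}(y_i) tr(x_i α(a)). -/

import Mathlib

/-!
An `(α,β)`-Frobenius isomorphism `Φ` is determined by the single twisted trace `tr = Φ 1`, through
`Φ a x = tr (x * α a)`; the Frobenius condition then says that `tr` is nondegenerate and that every
`β`-twisted `B`-linear functional `A → B` is of the form `tr (· * α a)`.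
Given a dual basis `(v i, σ i)` of the finitely generated projective `B`-module `A`, writing the
twisted coordinate functionals `β⁻¹ ∘ σ i` as `tr (· * α (c i))` yields the dual generators
`x i = v i`, `y i = α (c i)`. Conversely, dual generators give the dual basis
`a ↦ β (tr (a * y i))`, and `f = tr (· * α (∑ i, α⁻¹ (y i) * f (x i)))` for every twisted
functional `f`.
-/

section

variable {A : Type u} [Ring A] (B : Subring A) (α : A ≃+* A) (β : B ≃+* B)

/-- `A` is an `(α,β)`-Frobenius extension of `B`: `A` is finitely generated projective as
a left `B`-module and there is an `(A,B)`-bimodule isomorphism `A ≅ Hom_B(_β A_α, B)`,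
where `_β A_α` is `A` with left `B`-action `b · a = β(b) a` and right `A`-action
`a · a' = a α(a')`, and the Hom space carries left `A`-action `(a · f)(x) = f(x α(a))`
and right `B`-action `(f · b)(x) = f(x) b`. -/
def IsTwistedFrobeniusExtension : Prop :=
  Module.Finite B A ∧ Module.Projective B A ∧
    ∃ Φ : A → A →+ B,
      (∀ a a' : A, Φ (a + a') = Φ a + Φ a') ∧
      (∀ (a : A) (b : B) (x : A), Φ a ((β b : A) * x) = b * Φ a x) ∧
      (∀ (a a' x : A), Φ (a' * a) x = Φ a (x * α a')) ∧
      (∀ (a : A) (b : B) (x : A), Φ (a * (b : A)) x = Φ a x * b) ∧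
      (∀ a : A, (∀ x : A, Φ a x = 0) → a = 0) ∧
      (∀ f : A →+ B, (∀ (b : B) (x : A), f ((β b : A) * x) = b * f x) →
        ∃ a : A, ∀ x : A, f x = Φ a x)

namespace Module

variable {R M : Type*} [Semiring R] [AddCommMonoid M] [Module R M]

theorem finite_projective_iff_exists_dual_basis :
    (Module.Finite R M ∧ Module.Projective R M) ↔
      ∃ (n : ℕ) (v : Fin n → M) (σ : M →ₗ[R] Fin n → R), ∀ m, ∑ i, σ m i • v i = m := by
  constructor
  · rintro ⟨_, _⟩
    obtain ⟨n, f, σ, -, -, hfσ⟩ := Module.Finite.exists_comp_eq_id_of_projective R M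
    refine ⟨n, fun i => f fun j => if i = j then 1 else 0, σ, fun m => ?_⟩
    rw [← LinearMap.pi_apply_eq_sum_univ, ← LinearMap.comp_apply, hfσ, LinearMap.id_apply]
  · rintro ⟨n, v, σ, hσ⟩
    have hsplit : Fintype.linearCombination R v ∘ₗ σ = .id := LinearMap.ext hσ
    exact ⟨.of_surjective _ (LinearMap.surjective_of_comp_eq_id _ _ hsplit),
      .of_split σ _ hsplit⟩

end Module

section TwistedFrobenius

variable {B}

def IsTwistedBimoduleHom (tr : A →+ B) : Prop :=
  ∀ (b b' : B) (z : A), tr ((β b : A) * z * α (b' : A)) = b * tr z * b'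

def IsTwistedLeftLinear (f : A →+ B) : Prop :=
  ∀ (b : B) (z : A), f ((β b : A) * z) = b * f z

variable {α β}

theorem IsTwistedBimoduleHom.map_twist_mul {tr : A →+ B} (htr : IsTwistedBimoduleHom α β tr)
    (b : B) (z : A) : tr ((β b : A) * z) = b * tr z := by
  simpa using htr b 1 z

theorem IsTwistedBimoduleHom.map_mul_twist {tr : A →+ B} (htr : IsTwistedBimoduleHom α β tr)
    (z : A) (b : B) : tr (z * α (b : A)) = tr z * b := by
  simpa using htr 1 b z

theorem isTwistedLeftLinear_symm_comp (g : A →ₗ[B] B) :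
    IsTwistedLeftLinear β (β.symm.toAddMonoidHom.comp g.toAddMonoidHom) := by
  intro b z
  change β.symm (g (β b • z)) = b * β.symm (g z)
  rw [map_smul, smul_eq_mul, map_mul, RingEquiv.symm_apply_apply]

theorem isTwistedFrobeniusExtension_iff_exists_trace :
    IsTwistedFrobeniusExtension B α β ↔
      Module.Finite B A ∧ Module.Projective B A ∧ ∃ tr : A →+ B, IsTwistedBimoduleHom α β tr ∧
        (∀ a : A, (∀ z : A, tr (z * α a) = 0) → a = 0) ∧
        ∀ f : A →+ B, IsTwistedLeftLinear β f → ∃ a : A, ∀ z : A, f z = tr (z * α a) := by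
  constructor
  · rintro ⟨hfin, hproj, Φ, -, hΦβ, hΦα, hΦB, hinj, hsurj⟩
    have hΦ : ∀ a z, Φ a z = Φ 1 (z * α a) := fun a z => by simpa using hΦα 1 a z
    refine ⟨hfin, hproj, Φ 1, fun b b' z => ?_, fun a ha => hinj a (by simpa [hΦ] using ha),
      fun f hf => by simpa [hΦ] using hsurj f hf⟩
    rw [← hΦ, hΦβ, ← one_mul (b' : A), hΦB, mul_assoc]
  · rintro ⟨hfin, hproj, tr, htr, hnd, hsurj⟩
    refine ⟨hfin, hproj, fun a => tr.comp (AddMonoidHom.mulRight (α a)), fun a a' => ?_,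
      fun a b z => ?_, fun a a' z => ?_, fun a b z => ?_, hnd, hsurj⟩
    · ext z
      simp [mul_add]
    · simp [mul_assoc, htr.map_twist_mul]
    · simp [mul_assoc]
    · simp [← mul_assoc, htr.map_mul_twist]

theorem exists_dual_generators_of_trace {tr : A →+ B} (htr : IsTwistedBimoduleHom α β tr)
    (hnd : ∀ a : A, (∀ z : A, tr (z * α a) = 0) → a = 0)
    (hsurj : ∀ f : A →+ B, IsTwistedLeftLinear β f → ∃ a : A, ∀ z : A, f z = tr (z * α a))
    {n : ℕ} (v : Fin n → A) (σ : A →ₗ[B] Fin n → B) (hσ : ∀ a, ∑ i, σ a i • v i = a) :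
    ∃ y : Fin n → A, (∀ a : A, a = ∑ i, ((β (tr (a * y i)) : B) : A) * v i) ∧
      ∀ a : A, a = ∑ i, α.symm (y i) * ((tr (v i * α a) : B) : A) := by
  have hc (i : Fin n) : ∃ c : A, ∀ z, β.symm (σ z i) = tr (z * α c) :=
    hsurj _ (isTwistedLeftLinear_symm_comp ((LinearMap.proj i : (Fin n → B) →ₗ[B] B) ∘ₗ σ))
  choose c hc using hc
  have hcoord (z : A) (i : Fin n) : σ z i = β (tr (z * α (c i))) := by
    rw [← hc, RingEquiv.apply_symm_apply]
  have hexpand (z a : A) : tr (z * α a) = ∑ i, tr (z * α (c i)) * tr (v i * α a) := by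
    conv_lhs => rw [← hσ z]
    simp only [Finset.sum_mul, map_sum, Subring.smul_def, smul_eq_mul, hcoord, mul_assoc,
      htr.map_twist_mul]
  refine ⟨fun i => α (c i), fun a => ?_, fun a => ?_⟩
  · simpa [← hcoord, Subring.smul_def] using (hσ a).symm
  · refine sub_eq_zero.mp (hnd _ fun z => ?_)
    simp only [RingEquiv.symm_apply_apply, mul_sub, map_sub, map_sum, Finset.mul_sum, map_mul,
      ← mul_assoc, htr.map_mul_twist, hexpand z a, sub_self]

theorem finite_projective_of_dual_generators {tr : A →+ B} (htr : IsTwistedBimoduleHom α β tr)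
    {n : ℕ} {x y : Fin n → A} (hxy : ∀ a : A, a = ∑ i, ((β (tr (a * y i)) : B) : A) * x i) :
    Module.Finite B A ∧ Module.Projective B A := by
  let σ : A →ₗ[B] Fin n → B :=
    { toFun := fun a i => β (tr (a * y i))
      map_add' := fun a a' => by ext i; simp [add_mul]
      map_smul' := fun b a => by
        obtain ⟨b, rfl⟩ := β.surjective b
        ext i
        simp [Subring.smul_def, mul_assoc, htr.map_twist_mul] }
  exact Module.finite_projective_iff_exists_dual_basis.mpr
    ⟨n, x, σ, fun a => by simpa [σ, Subring.smul_def] using (hxy a).symm⟩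

theorem exists_eq_trace_mul_of_dual_generators {tr : A →+ B} (htr : IsTwistedBimoduleHom α β tr)
    {n : ℕ} {x y : Fin n → A} (hxy : ∀ a : A, a = ∑ i, ((β (tr (a * y i)) : B) : A) * x i)
    {f : A →+ B} (hf : IsTwistedLeftLinear β f) : ∃ a : A, ∀ z : A, f z = tr (z * α a) := by
  refine ⟨∑ i, α.symm (y i) * f (x i), fun z => ?_⟩
  conv_lhs => rw [hxy z]
  simp only [map_sum, map_mul, RingEquiv.apply_symm_apply, Finset.mul_sum, ← mul_assoc,
    htr.map_mul_twist]
  exact Finset.sum_congr rfl fun i _ => hf _ _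

end TwistedFrobenius

theorem isTwistedFrobeniusExtension_iff_dual_generators :
    IsTwistedFrobeniusExtension B α β ↔
      ∃ (tr : A →+ B) (n : ℕ) (x y : Fin n → A),
        (∀ (b b' : B) (z : A), tr ((β b : A) * z * α (b' : A)) = b * tr z * b') ∧
        (∀ a : A, a = ∑ i, ((β (tr (a * y i)) : B) : A) * x i) ∧
        (∀ a : A, a = ∑ i, α.symm (y i) * ((tr (x i * α a) : B) : A)) := by
  rw [isTwistedFrobeniusExtension_iff_exists_trace]
  constructor
  · rintro ⟨hfin, hproj, tr, htr, hnd, hsurj⟩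
    obtain ⟨n, v, σ, hσ⟩ := Module.finite_projective_iff_exists_dual_basis.mp ⟨hfin, hproj⟩
    obtain ⟨y, hvy, hyv⟩ := exists_dual_generators_of_trace htr hnd hsurj v σ hσ
    exact ⟨tr, n, v, y, htr, hvy, hyv⟩
  · rintro ⟨tr, n, x, y, htr, hxy, hyx⟩
    obtain ⟨hfin, hproj⟩ := finite_projective_of_dual_generators htr hxy
    refine ⟨hfin, hproj, tr, htr, fun a ha => ?_, fun f hf =>
      exists_eq_trace_mul_of_dual_generators htr hxy hf⟩
    simpa [ha] using hyx a

end
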